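/- Let R be a commutative ring, (M,λ,∂) a formed space with boundary over R, n ≥ 1, and f : X^{#n} → (M,λ,∂) a morphism of formed spaces with boundary. Then f is injective, M = f(Rⁿ) ⊕ (M∖f(Rⁿ)) as R-modules, and (M,λ,∂) is isomorphic to the sum (M∖f(Rⁿ), λ restricted, ∂ restricted) # X^{#n}. -/
import Mathlib


/-- The bilinear form of the formed space with boundary `X^{#n}`. -/
def lamX (R : Type) [CommRing R] (n : ℕ) (x y : Fin n → R) : R :=
  ∑ i : Fin n, ∑ j : Fin n, (if (i : ℕ) < (j : ℕ) then x i * y j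
    else if (j : ℕ) < (i : ℕ) then -(x i * y j) else 0)

/-- The boundary map of `X^{#n}`. -/
def bdX (R : Type) [CommRing R] (n : ℕ) (x : Fin n → R) : R := ∑ i, x i

/-- any morphism of formed spaces with boundary `X^{#n} → (M, λ, ∂)` is
injective, `M` splits as the internal direct sum of the image of `f` and the `λ'`-orthogonal
complement `W = M∖f(Rⁿ)`, and `(M, λ, ∂)` is isomorphic to `(W, λ|_W, ∂|_W) # X^{#n}`. -/
theorem X_splitting
    (R : Type) [CommRing R]
    (M : Type) [AddCommGroup M] [Module R M] [Module.Finite R M] [Module.Free R M]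
    (lam : M →ₗ[R] M →ₗ[R] R) (halt : ∀ v : M, lam v v = 0) (bd : M →ₗ[R] R)
    (n : ℕ) (hn : 1 ≤ n) (f : (Fin n → R) →ₗ[R] M)
    (hfl : ∀ x y, lam (f x) (f y) = lamX R n x y)
    (hfb : ∀ x, bd (f x) = bdX R n x)
    (W : Submodule R M)
    (hW : ∀ m : M, m ∈ W ↔ ∀ x, lam (f x) m + bd (f x) * bd m = 0) :
    Function.Injective f ∧
    IsCompl (LinearMap.range f) W ∧
    ∃ e : M ≃ₗ[R] W × (Fin n → R),
      (∀ m m' : M, lam m m' =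
          lam ((e m).1 : M) ((e m').1 : M) + lamX R n (e m).2 (e m').2
            + bd ((e m).1 : M) * bdX R n (e m').2 - bd ((e m').1 : M) * bdX R n (e m).2) ∧
      (∀ m : M, bd m = bd ((e m).1 : M) + bdX R n (e m).2) := by
  classical
  -- the Gram matrix of the curved form λ' on X^{#n}
  set A : Matrix (Fin n) (Fin n) R := Matrix.of fun i j =>
    if (i : ℕ) < (j : ℕ) then (2 : R) else if (i : ℕ) = (j : ℕ) then 1 else 0 with hA
  have hAdet : A.det = 1 := by
    have ht : A.BlockTriangular id := by
      intro i j hij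
      have h1 : ¬ ((i : ℕ) < (j : ℕ)) := by
        simp only [id] at hij; omega
      have h2 : ¬ ((i : ℕ) = (j : ℕ)) := by
        simp only [id] at hij; omega
      have h1' : ¬ i < j := h1
      have h2' : i ≠ j := fun hh => h2 (by rw [hh])
      simp [hA, h1, h2, h1', h2']
    rw [Matrix.det_of_upperTriangular ht]
    have : ∀ i : Fin n, A i i = 1 := by
      intro i; simp [hA]
    simp [this]
  have hInv : A⁻¹ * A = 1 := Matrix.nonsing_inv_mul A (by rw [hAdet]; exact isUnit_one)
  have hInv' : A * A⁻¹ = 1 := Matrix.mul_nonsing_inv A (by rw [hAdet]; exact isUnit_one)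
  -- the "coordinates of the curved form" linear map b : M → Rⁿ
  set bL : M →ₗ[R] (Fin n → R) := LinearMap.pi fun i =>
    lam (f (Pi.single i 1)) + bd (f (Pi.single i 1)) • bd with hbLdef
  have hbLapp : ∀ (m : M) (i : Fin n),
      bL m i = lam (f (Pi.single i 1)) m + bd (f (Pi.single i 1)) * bd m := by
    intro m i
    simp [hbLdef, LinearMap.pi_apply, smul_eq_mul]
  -- every x is a combination of the standard basis
  have hfx : ∀ x : Fin n → R, f x = ∑ i, x i • f (Pi.single i 1) := by
    intro x
    have hx : x = ∑ i, x i • (Pi.single i 1 : Fin n → R) := by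
      funext j
      simp [Pi.single_apply, Finset.sum_ite_eq']
    conv_lhs => rw [hx]
    simp
  -- the curved form against f x in terms of bL
  have hL2 : ∀ (x : Fin n → R) (m : M),
      lam (f x) m + bd (f x) * bd m = ∑ i, x i * bL m i := by
    intro x m
    rw [hfx x]
    simp only [map_sum, map_smul, LinearMap.sum_apply, LinearMap.smul_apply,
      smul_eq_mul, Finset.sum_mul]
    rw [← Finset.sum_add_distrib]
    refine Finset.sum_congr rfl fun i _ => ?_
    rw [hbLapp]
    ring
  have hbdX1 : ∀ i : Fin n, bdX R n (Pi.single i 1) = 1 := by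
    intro i; simp [bdX, Pi.single_apply]
  -- bL on the image of f : Gram matrix
  have hbf : ∀ x : Fin n → R, bL (f x) = A.mulVec x := by
    intro x
    funext i
    rw [hbLapp, hfl, hfb, hfb, hbdX1, one_mul]
    simp only [lamX, bdX, Matrix.mulVec, dotProduct]
    rw [Finset.sum_eq_single i (fun k _ hk => by
        simp [Pi.single_eq_of_ne hk]) (by simp)]
    rw [← Finset.sum_add_distrib]
    refine Finset.sum_congr rfl fun j _ => ?_
    rcases lt_trichotomy ((i : ℕ)) ((j : ℕ)) with h | h | h
    · have h2 : ¬ ((j : ℕ) < (i : ℕ)) := by omega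
      have h' : i < j := h
      have h2' : ¬ j < i := h2
      simp only [hA, Matrix.of_apply, Pi.single_eq_same, if_pos h, if_pos h', if_neg h2, if_neg h2']
      ring
    · have h1 : ¬ ((i : ℕ) < (j : ℕ)) := by omega
      have h2 : ¬ ((j : ℕ) < (i : ℕ)) := by omega
      have h1' : ¬ i < j := h1
      have h2' : ¬ j < i := h2
      simp only [hA, Matrix.of_apply, Pi.single_eq_same, if_neg h1, if_neg h1', if_neg h2, if_neg h2', if_pos h]
      ring
    · have h1 : ¬ ((i : ℕ) < (j : ℕ)) := by omega
      have h2 : ¬ ((i : ℕ) = (j : ℕ)) := by omega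
      have h1' : ¬ i < j := h1
      have h' : j < i := h
      simp only [hA, Matrix.of_apply, Pi.single_eq_same, if_neg h1, if_neg h1', if_pos h, if_pos h', if_neg h2]
      ring
  -- the retraction g
  set g : M →ₗ[R] (Fin n → R) := (Matrix.mulVecLin A⁻¹) ∘ₗ bL with hgdef
  have hgapp : ∀ m : M, g m = A⁻¹.mulVec (bL m) := by
    intro m; simp [hgdef]
  have hgf : ∀ x : Fin n → R, g (f x) = x := by
    intro x
    rw [hgapp, hbf, Matrix.mulVec_mulVec, hInv, Matrix.one_mulVec]
  have hinj : Function.Injective f := by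
    intro x y hxy
    have : g (f x) = g (f y) := by rw [hxy]
    rwa [hgf, hgf] at this
  -- membership in W in terms of bL
  have hmemW : ∀ m : M, m ∈ W ↔ bL m = 0 := by
    intro m
    rw [hW]
    constructor
    · intro h
      funext i
      have := h (Pi.single i 1)
      rw [← hbLapp] at this
      simpa using this
    · intro h x
      rw [hL2, h]
      simp
  have hgW : ∀ m ∈ W, g m = 0 := by
    intro m hm
    rw [hgapp, (hmemW m).mp hm, Matrix.mulVec_zero]
  have hAg : ∀ m : M, A.mulVec (g m) = bL m := by
    intro m
    rw [hgapp, Matrix.mulVec_mulVec, hInv', Matrix.one_mulVec]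
  have hpm : ∀ m : M, m - f (g m) ∈ W := by
    intro m
    rw [hmemW, map_sub, hbf, hAg, sub_self]
  -- complementarity
  have hdis : Disjoint (LinearMap.range f) W := by
    rw [Submodule.disjoint_def]
    rintro m ⟨x, rfl⟩ hmW
    have h0 : g (f x) = 0 := hgW _ hmW
    rw [hgf] at h0
    rw [h0, map_zero]
  have hcod : Codisjoint (LinearMap.range f) W := by
    rw [codisjoint_iff, eq_top_iff]
    intro m _
    rw [Submodule.mem_sup]
    exact ⟨f (g m), ⟨g m, rfl⟩, m - f (g m), hpm m, by abel⟩
  refine ⟨hinj, ⟨hdis, hcod⟩, ?_⟩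
  -- build the equivalence
  have hpm' : ∀ m : M, ((LinearMap.id : M →ₗ[R] M) - f ∘ₗ g) m ∈ W := by
    intro m
    simpa using hpm m
  let pW : M →ₗ[R] W := LinearMap.codRestrict W ((LinearMap.id : M →ₗ[R] M) - f ∘ₗ g) hpm'
  let eF : M →ₗ[R] W × (Fin n → R) := LinearMap.prod pW g
  let eB : W × (Fin n → R) →ₗ[R] M :=
    (W.subtype ∘ₗ LinearMap.fst R W (Fin n → R)) + (f ∘ₗ LinearMap.snd R W (Fin n → R))
  have heB : ∀ wx : W × (Fin n → R), eB wx = (wx.1 : M) + f wx.2 := fun _ => rfl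
  have heF1 : ∀ m : M, ((eF m).1 : M) = m - f (g m) := fun _ => rfl
  have heF2 : ∀ m : M, (eF m).2 = g m := fun _ => rfl
  have h1 : eF ∘ₗ eB = LinearMap.id := by
    apply LinearMap.ext
    rintro ⟨⟨w, hw⟩, x⟩
    have hgw : g w = 0 := hgW w hw
    have hgwx : g (w + f x) = x := by
      rw [map_add, hgw, hgf, zero_add]
    apply Prod.ext
    · apply Subtype.ext
      show ((eF (eB (⟨w, hw⟩, x))).1 : M) = w
      rw [heF1, heB, hgwx]
      abel
    · show (eF (eB (⟨w, hw⟩, x))).2 = x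
      rw [heF2, heB, hgwx]
  have h2 : eB ∘ₗ eF = LinearMap.id := by
    apply LinearMap.ext
    intro m
    show eB (eF m) = m
    rw [heB, heF1, heF2]
    abel
  refine ⟨LinearEquiv.ofLinear eF eB h1 h2, ?_, ?_⟩
  · -- the form formula
    intro m m'
    set eq := LinearEquiv.ofLinear eF eB h1 h2 with heq
    have he1 : ∀ k : M, ((eq k).1 : M) = k - f (g k) := fun _ => rfl
    have he2 : ∀ k : M, (eq k).2 = g k := fun _ => rfl
    have hmem : ∀ k : M, ((eq k).1 : M) ∈ W := fun k => (eq k).1.2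
    -- antisymmetry
    have hanti : ∀ u v : M, lam u v = - lam v u := by
      intro u v
      have h0 := halt (u + v)
      simp only [map_add, LinearMap.add_apply, halt] at h0
      linear_combination h0
    have hWorth : ∀ (x : Fin n → R) (w : M), w ∈ W →
        lam (f x) w = -(bdX R n x * bd w) := by
      intro x w hw
      have := (hW w).mp hw x
      rw [hfb] at this
      linear_combination this
    have hd : ∀ k : M, k = ((eq k).1 : M) + f ((eq k).2) := by
      intro k
      rw [he1, he2]
      abel
    conv_lhs => rw [hd m, hd m']
    simp only [map_add, LinearMap.add_apply, he2]
    rw [hfl]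
    rw [hWorth _ _ (hmem m')]
    have hxw : lam ((eq m).1 : M) (f (g m')) = bdX R n (g m') * bd ((eq m).1 : M) := by
      rw [hanti, hWorth _ _ (hmem m)]
      ring
    rw [hxw]
    ring
  · intro m
    set eq := LinearEquiv.ofLinear eF eB h1 h2 with heq
    have hd : m = ((eq m).1 : M) + f ((eq m).2) := by
      show m = (m - f (g m)) + f (g m)
      abel
    conv_lhs => rw [hd]
    rw [map_add, hfb]
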